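/- arXiv:2003.00630 — 3 statements merged into one kernel-verified Lean document; each statement's English description precedes it below -/
import Mathlib

section
/- Let ℙ_∞ = { (1/N) Σ_{k∈[N]} δ(· − c^k) : ‖c^k − c̄^k‖_r ≤ θ for all k } be the ∞-Wasserstein ball around the empirical distribution of points c̄^1,...,c̄^N ∈ ℝ^n. For a nonempty finite X ⊆ 2^[n] with nonempty members, define v_D = min_{x∈X} sup_{ℙ∈ℙ_∞} E_ℙ[max_{j∈x} c̃_j] and v_D^{SAA} = min_{x∈X} (1/N) Σ_{k∈[N]} max_{j∈x} c̄^k_j. Then v_D = v_D^{SAA} + θ. -/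
/-- The ℓ_r norm on `Fin n → ℝ` for a real exponent `r`. -/
noncomputable def lpNorm {n : ℕ} (r : ℝ) (v : Fin n → ℝ) : ℝ :=
  (∑ j, |v j| ^ r) ^ (1 / r)

/-!
Fix a candidate `x`. An admissible perturbation moves every coordinate of `c̄^k` by at most `θ`,
since each coordinate is dominated by the ℓ_r norm, so it raises `max_{j ∈ x} c̄^k_j` by at most
`θ`; adding `θ` to a maximising coordinate alone costs exactly `θ` in ℓ_r norm and attains that
bound. Hence the worst-case expectation for `x` is the empirical one plus `θ`, and the shift by
the constant `θ` commutes with the minimum over `X`.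
-/

open Finset

section LpNorm

variable {n : ℕ} {r : ℝ}

lemma abs_le_lpNorm (hr : 0 < r) (v : Fin n → ℝ) (j : Fin n) : |v j| ≤ lpNorm r v := by
  calc |v j| = (|v j| ^ r) ^ (1 / r) := by
        rw [← Real.rpow_mul (abs_nonneg _), mul_one_div_cancel hr.ne', Real.rpow_one]
    _ ≤ lpNorm r v :=
        Real.rpow_le_rpow (by positivity)
          (single_le_sum (f := fun i => |v i| ^ r) (fun i _ => by positivity) (mem_univ j)) (by positivity)

lemma lpNorm_pi_single (hr : 0 < r) (j : Fin n) {θ : ℝ} (hθ : 0 ≤ θ) :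
    lpNorm r (Pi.single j θ) = θ := by
  have hsum : ∑ i, |(Pi.single j θ : Fin n → ℝ) i| ^ r = θ ^ r := by
    rw [sum_eq_single j (fun i _ hi => by simp [hi, Real.zero_rpow hr.ne']) (by simp)]
    simp [abs_of_nonneg hθ]
  rw [lpNorm, hsum, ← Real.rpow_mul hθ, mul_one_div_cancel hr.ne', Real.rpow_one]

lemma sup'_le_sup'_add_of_lpNorm_sub_le (hr : 0 < r) {x : Finset (Fin n)} (hx : x.Nonempty)
    {c cbar : Fin n → ℝ} {θ : ℝ} (h : lpNorm r (c - cbar) ≤ θ) :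
    x.sup' hx c ≤ x.sup' hx cbar + θ := by
  refine sup'_le hx c fun i hi => ?_
  have hci : c i - cbar i ≤ θ :=
    (le_abs_self _).trans ((abs_le_lpNorm hr (c - cbar) i).trans h)
  have hcbar : cbar i ≤ x.sup' hx cbar := le_sup' cbar hi
  linarith

lemma exists_lpNorm_sub_le_sup'_eq_add (hr : 0 < r) {x : Finset (Fin n)} (hx : x.Nonempty)
    (cbar : Fin n → ℝ) {θ : ℝ} (hθ : 0 ≤ θ) :
    ∃ c : Fin n → ℝ, lpNorm r (c - cbar) ≤ θ ∧ x.sup' hx c = x.sup' hx cbar + θ := by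
  obtain ⟨j, hj, hmax⟩ := exists_mem_eq_sup' hx cbar
  let c : Fin n → ℝ := cbar + Pi.single j θ
  have hnorm : lpNorm r (c - cbar) ≤ θ := by
    rw [add_sub_cancel_left, lpNorm_pi_single hr j hθ]
  refine ⟨c, hnorm, le_antisymm (sup'_le_sup'_add_of_lpNorm_sub_le hr hx hnorm) ?_⟩
  calc x.sup' hx cbar + θ = c j := by simp [c, hmax]
    _ ≤ x.sup' hx c := le_sup' c hj

end LpNorm

lemma one_div_mul_sum_add_const {N : ℕ} (hN : 0 < N) (f : Fin N → ℝ) (θ : ℝ) :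
    (1 / N : ℝ) * ∑ k, (f k + θ) = (1 / N : ℝ) * ∑ k, f k + θ := by
  rw [sum_add_distrib, sum_const, card_univ, Fintype.card_fin, nsmul_eq_mul]
  field_simp

theorem isGreatest_mean_sSup_image_of_lpNorm_sub_le {n N : ℕ} (hN : 0 < N) {r θ : ℝ}
    (hr : 0 < r) (hθ : 0 ≤ θ) {x : Finset (Fin n)} (hx : x.Nonempty) (cbar : Fin N → Fin n → ℝ) :
    IsGreatest {e : ℝ | ∃ c : Fin N → Fin n → ℝ,
        (∀ k, lpNorm r (fun j => c k j - cbar k j) ≤ θ) ∧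
        e = (1 / N : ℝ) * ∑ k : Fin N, sSup (c k '' ↑x)}
      ((1 / N : ℝ) * ∑ k : Fin N, sSup (cbar k '' ↑x) + θ) := by
  simp only [← sup'_eq_csSup_image x hx]
  constructor
  · choose c hc hsup using fun k => exists_lpNorm_sub_le_sup'_eq_add hr hx (cbar k) hθ
    exact ⟨c, hc, by simp only [hsup, one_div_mul_sum_add_const hN]⟩
  · rintro e ⟨c, hc, rfl⟩
    rw [← one_div_mul_sum_add_const hN]
    gcongr with k
    exact sup'_le_sup'_add_of_lpNorm_sub_le hr hx (hc k)

lemma sInf_setOf_exists_mem_eq {ι α : Type*} [ConditionallyCompleteLinearOrder α]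
    (X : Finset ι) (hX : X.Nonempty) (g : ι → α) :
    sInf {t | ∃ x ∈ X, t = g x} = X.inf' hX g := by
  rw [inf'_eq_csInf_image]
  congr 1
  ext t
  simp [eq_comm]

/-- For DRBCP-D under the ∞-Wasserstein ball (each empirical point may be
perturbed within an ℓ_r-ball of radius θ), `v_D = v_D^{SAA} + θ`. -/
theorem drbcp_d_eq_saa_plus_radius (n N : ℕ) (hN : 0 < N)
    (X : Finset (Finset (Fin n))) (hX : X.Nonempty) (hne : ∀ x ∈ X, x.Nonempty)
    (cbar : Fin N → Fin n → ℝ) (θ r : ℝ) (hθ : 0 ≤ θ) (hr : 1 ≤ r)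
    (vD vDSAA : ℝ)
    (hvD : vD = sInf {t : ℝ | ∃ x ∈ X, t =
      sSup {e : ℝ | ∃ c : Fin N → Fin n → ℝ,
        (∀ k, lpNorm r (fun j => c k j - cbar k j) ≤ θ) ∧
        e = (1 / N : ℝ) * ∑ k : Fin N, sSup (c k '' ↑x)}})
    (hvDSAA : vDSAA = sInf {t : ℝ | ∃ x ∈ X, t =
      (1 / N : ℝ) * ∑ k : Fin N, sSup (cbar k '' ↑x)}) :
    vD = vDSAA + θ := by
  set saa : Finset (Fin n) → ℝ := fun x => (1 / N : ℝ) * ∑ k : Fin N, sSup (cbar k '' ↑x)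
  have worstCase : ∀ x ∈ X, sSup {e : ℝ | ∃ c : Fin N → Fin n → ℝ,
      (∀ k, lpNorm r (fun j => c k j - cbar k j) ≤ θ) ∧
      e = (1 / N : ℝ) * ∑ k : Fin N, sSup (c k '' ↑x)} = saa x + θ := fun x hx =>
    (isGreatest_mean_sSup_image_of_lpNorm_sub_le hN (by linarith) hθ (hne x hx) cbar).csSup_eq
  calc vD = sInf {t : ℝ | ∃ x ∈ X, t = saa x + θ} := by
        rw [hvD]
        congr 1
        ext t
        simp only [Set.mem_ofPred_eq]
        refine exists_congr fun x => and_congr_right fun hx => ?_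
        rw [worstCase x hx]
    _ = X.inf' hX saa + θ := by
        rw [sInf_setOf_exists_mem_eq X hX]
        exact (map_finset_inf' (OrderIso.addRight θ) hX saa).symm
    _ = vDSAA + θ := by rw [hvDSAA, ← sInf_setOf_exists_mem_eq X hX]
end

section
/- Fix Γ ≥ 1, θ ≥ 0, r ≥ 1, a nonempty finite set x ⊆ [n] with |x| ≥ Γ, and c ∈ ℝ^n. Then max{ max_{s ⊆ x, |s|=Γ} Σ_{j∈s} c'_j : ‖c' − c‖_r ≤ θ } = max_{s ⊆ x, |s|=Γ} Σ_{j∈s} c_j + Γ^{(r−1)/r} θ. -/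
/-!
The upper bound is Hölder's inequality: on a set `s` of size `Γ`, the coordinates of a perturbation
`β` with `‖β‖_r ≤ θ` add up to at most `Γ^{(r-1)/r} ‖β‖_r ≤ Γ^{(r-1)/r} θ`, so no `Γ`-subset sum of
`c + β` exceeds the best one of `c` by more than that. It is attained by raising every coordinate of
an optimal `Γ`-subset `s₀` of `c` by `θ / Γ^{1/r}`: this perturbation has `ℓ_r` norm exactly `θ`,
and the sum of `c + β` over `s₀` is the best sum of `c` plus `Γ^{(r-1)/r} θ`.
-/

open Finset

theorem sSup_setOf_exists_mem_eq {α : Type*} {T : Finset α} (hT : T.Nonempty) (F : α → ℝ) :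
    sSup {u : ℝ | ∃ s ∈ T, u = F s} = T.sup' hT F := by
  rw [sup'_eq_csSup_image]
  congr 1
  ext u
  simp [eq_comm]

section lpNorm

variable {n : ℕ} {r : ℝ}

theorem sum_abs_le_card_rpow_mul_lpNorm (hr : 1 ≤ r) (v : Fin n → ℝ) (s : Finset (Fin n)) :
    ∑ j ∈ s, |v j| ≤ (#s : ℝ) ^ ((r - 1) / r) * lpNorm r v := by
  have hr₀ : 0 < r := one_pos.trans_le hr
  have holder := Real.inner_le_weight_mul_Lp_of_nonneg s hr (fun _ ↦ 1) (fun j ↦ |v j|)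
    (fun _ ↦ zero_le_one) (fun j ↦ abs_nonneg _)
  simp only [one_mul, sum_const, nsmul_eq_mul, mul_one] at holder
  have hexp : 1 - r⁻¹ = (r - 1) / r := by field_simp
  calc ∑ j ∈ s, |v j| ≤ (#s : ℝ) ^ (1 - r⁻¹) * (∑ j ∈ s, |v j| ^ r) ^ r⁻¹ := holder
    _ ≤ (#s : ℝ) ^ ((r - 1) / r) * lpNorm r v := by
      rw [hexp, lpNorm, one_div]
      gcongr
      exact subset_univ s

theorem lpNorm_indicator_const (hr : r ≠ 0) (s : Finset (Fin n)) {δ : ℝ} (hδ : 0 ≤ δ) :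
    lpNorm r ((s : Set (Fin n)).indicator fun _ ↦ δ) = (#s : ℝ) ^ (1 / r) * δ := by
  have hpow : ∀ j, |(s : Set (Fin n)).indicator (fun _ ↦ δ) j| ^ r
      = (s : Set (Fin n)).indicator (fun _ ↦ δ ^ r) j := by
    intro j
    by_cases hj : j ∈ s <;> simp [hj, abs_of_nonneg hδ, Real.zero_rpow hr]
  rw [lpNorm, funext hpow, sum_indicator_subset _ (subset_univ s), sum_const, nsmul_eq_mul,
    Real.mul_rpow (Nat.cast_nonneg _) (Real.rpow_nonneg hδ _), ← Real.rpow_mul hδ,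
    mul_one_div_cancel hr, Real.rpow_one]

end lpNorm

theorem sup'_sum_le_of_lpNorm_sub_le {n Γ : ℕ} {θ r : ℝ} (hr : 1 ≤ r) {x : Finset (Fin n)}
    (hT : (powersetCard Γ x).Nonempty) {c c' : Fin n → ℝ}
    (hc' : lpNorm r (fun j ↦ c' j - c j) ≤ θ) :
    (powersetCard Γ x).sup' hT (fun s ↦ ∑ j ∈ s, c' j)
      ≤ (powersetCard Γ x).sup' hT (fun s ↦ ∑ j ∈ s, c j) + (Γ : ℝ) ^ ((r - 1) / r) * θ := by
  refine sup'_le _ _ fun s hs ↦ ?_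
  have hsΓ : #s = Γ := (mem_powersetCard.1 hs).2
  have hperturb : ∑ j ∈ s, (c' j - c j) ≤ (Γ : ℝ) ^ ((r - 1) / r) * θ :=
    calc ∑ j ∈ s, (c' j - c j) ≤ ∑ j ∈ s, |c' j - c j| := sum_le_sum fun j _ ↦ le_abs_self _
      _ ≤ (Γ : ℝ) ^ ((r - 1) / r) * lpNorm r (fun j ↦ c' j - c j) := by
        rw [← hsΓ]; exact sum_abs_le_card_rpow_mul_lpNorm hr _ s
      _ ≤ (Γ : ℝ) ^ ((r - 1) / r) * θ := by gcongr
  have hc : ∑ j ∈ s, c j ≤ (powersetCard Γ x).sup' hT (fun s ↦ ∑ j ∈ s, c j) :=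
    le_sup' (fun s ↦ ∑ j ∈ s, c j) hs
  rw [sum_sub_distrib] at hperturb
  linarith

theorem rpow_sub_one_div_mul_eq {Γ r : ℝ} (hΓ : 0 < Γ) (hr : r ≠ 0) (θ : ℝ) :
    Γ ^ ((r - 1) / r) * θ = Γ * (θ / Γ ^ (1 / r)) := by
  rw [show (r - 1) / r = 1 - 1 / r by field_simp, Real.rpow_sub hΓ, Real.rpow_one]
  ring

theorem gamma_sum_worst_case_over_ball_general (n Γ : ℕ) (hΓ : 1 ≤ Γ)
    (θ r : ℝ) (hθ : 0 ≤ θ) (hr : 1 ≤ r)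
    (x : Finset (Fin n)) (hcard : Γ ≤ x.card) (c : Fin n → ℝ) :
    IsGreatest
      {t : ℝ | ∃ c' : Fin n → ℝ, lpNorm r (fun j => c' j - c j) ≤ θ ∧
        t = sSup {u : ℝ | ∃ s ∈ Finset.powersetCard Γ x, u = ∑ j ∈ s, c' j}}
      (sSup {u : ℝ | ∃ s ∈ Finset.powersetCard Γ x, u = ∑ j ∈ s, c j} +
        (Γ : ℝ) ^ ((r - 1) / r) * θ) := by
  have hT : (powersetCard Γ x).Nonempty := powersetCard_nonempty.2 hcard
  have hr₀ : r ≠ 0 := (one_pos.trans_le hr).ne'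
  have hΓ₀ : (0 : ℝ) < Γ := by exact_mod_cast hΓ
  simp only [sSup_setOf_exists_mem_eq hT]
  refine ⟨?_, fun t ⟨c', hc', ht⟩ ↦ ht ▸ sup'_sum_le_of_lpNorm_sub_le hr hT hc'⟩
  obtain ⟨s₀, hs₀, hmax⟩ := exists_mem_eq_sup' hT fun s ↦ ∑ j ∈ s, c j
  have hs₀Γ : #s₀ = Γ := (mem_powersetCard.1 hs₀).2
  set δ := θ / (Γ : ℝ) ^ (1 / r)
  set β := (s₀ : Set (Fin n)).indicator fun _ ↦ δ
  have hδ : 0 ≤ δ := by positivity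
  have hβ : lpNorm r (fun j ↦ (c j + β j) - c j) = θ := by
    simp only [add_sub_cancel_left]
    rw [lpNorm_indicator_const hr₀ s₀ hδ, hs₀Γ]
    exact mul_div_cancel₀ θ (by positivity)
  refine ⟨fun j ↦ c j + β j, hβ.le, le_antisymm ?_ (sup'_sum_le_of_lpNorm_sub_le hr hT hβ.le)⟩
  calc (powersetCard Γ x).sup' hT (fun s ↦ ∑ j ∈ s, c j) + (Γ : ℝ) ^ ((r - 1) / r) * θ
      = ∑ j ∈ s₀, (c j + β j) := by
        rw [hmax, sum_add_distrib, sum_indicator_subset _ subset_rfl, sum_const, hs₀Γ,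
          nsmul_eq_mul, rpow_sub_one_div_mul_eq hΓ₀ hr₀]
    _ ≤ _ := le_sup' (fun s ↦ ∑ j ∈ s, (c j + β j)) hs₀

/-- `max { max_{s⊆x,|s|=Γ} Σ_{j∈s} c'_j : ‖c' − c‖_r ≤ θ }
= max_{s⊆x,|s|=Γ} Σ_{j∈s} c_j + Γ^{(r−1)/r} θ`. -/
theorem gamma_sum_worst_case_over_ball (n Γ : ℕ) (hΓ : 1 ≤ Γ)
    (θ r : ℝ) (hθ : 0 ≤ θ) (hr : 1 ≤ r)
    (x : Finset (Fin n)) (hx : x.Nonempty) (hcard : Γ ≤ x.card) (c : Fin n → ℝ) :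
    IsGreatest
      {t : ℝ | ∃ c' : Fin n → ℝ, lpNorm r (fun j => c' j - c j) ≤ θ ∧
        t = sSup {u : ℝ | ∃ s ∈ Finset.powersetCard Γ x, u = ∑ j ∈ s, c' j}}
      (sSup {u : ℝ | ∃ s ∈ Finset.powersetCard Γ x, u = ∑ j ∈ s, c j} +
        (Γ : ℝ) ^ ((r - 1) / r) * θ) :=
  gamma_sum_worst_case_over_ball_general n Γ hΓ θ r hθ hr x hcard c
end

section
/- Let F_Γ be a nonempty finite family of nonempty collections of size-Γ subsets of [n], c̄^1,...,c̄^N ∈ ℝ^n, θ ≥ 0, r ≥ 1. Define v_{UΓ} = (1/N) Σ_k max_{y∈F_Γ} max{ min_{s∈y} Σ_{j∈s}(c̄^k_j + β_j) : Σ_{j ∈ ∪_{s∈y} s} β_j^r ≤ θ^r, β_j ≥ 0 } and v^{SAA}_{UΓ} = (1/N) Σ_k max_{y∈F_Γ} min_{s∈y} Σ_{j∈s} c̄^k_j. Then v^{SAA}_{UΓ} + Γθ / max_{y∈F_Γ} |∪_{s∈y} s|^{1/r} ≤ v_{UΓ} ≤ v^{SAA}_{UΓ} + Γ^{(r−1)/r}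 θ. -/
/-!
For each sample the robust value is squeezed between two explicit choices of the perturbation
`β`. Upper bound: for any feasible `β`, the minimum of `∑ j ∈ s, (c j + β j)` over `s ∈ y` is at
most the nominal minimum plus `max_{s ∈ y} ∑ j ∈ s, β j`, and by the power-mean inequality a
nonnegative `β` with `∑ β_j ^ r ≤ θ ^ r` has `∑ j ∈ s, β j ≤ Γ ^ ((r - 1) / r) * θ` on a set of
size `Γ`. Lower bound: on the maximising `y`, spread the budget uniformly,
`β_j = θ / |⋃ y| ^ (1 / r)`, which shifts every `∑ j ∈ s, c j` by the same amount
`Γ * θ / |⋃ y| ^ (1 / r)`. Averaging over the samples gives the theorem.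
-/

open Finset

lemma setOf_exists_mem_eq_image {α β : Type*} (s : Finset α) (f : α → β) :
    {t : β | ∃ a ∈ s, t = f a} = f '' ↑s := by
  ext t
  simp [eq_comm]

section ConditionallyComplete

variable {α β : Type*} [ConditionallyCompleteLinearOrder β]

lemma sSup_setOf_exists_mem_eq_s13 (s : Finset α) (hs : s.Nonempty) (f : α → β) :
    sSup {t : β | ∃ a ∈ s, t = f a} = s.sup' hs f := by
  rw [setOf_exists_mem_eq_image, sup'_eq_csSup_image]

lemma sInf_setOf_exists_mem_eq_s13 (s : Finset α) (hs : s.Nonempty) (f : α → β) :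
    sInf {t : β | ∃ a ∈ s, t = f a} = s.inf' hs f := by
  rw [setOf_exists_mem_eq_image, inf'_eq_csInf_image]

end ConditionallyComplete

lemma mean_add_const {N : ℕ} (hN : 0 < N) (a : Fin N → ℝ) (b : ℝ) :
    (1 / N : ℝ) * ∑ k, (a k + b) = (1 / N : ℝ) * ∑ k, a k + b := by
  have hN' : (N : ℝ) ≠ 0 := by positivity
  rw [sum_add_distrib, sum_const, card_univ, Fintype.card_fin, nsmul_eq_mul]
  field_simp

lemma sum_le_card_rpow_mul_of_sum_rpow_le {ι : Type*} {s : Finset ι} {β : ι → ℝ} {θ r : ℝ}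
    (hr : 1 ≤ r) (hθ : 0 ≤ θ) (hβ : ∀ j ∈ s, 0 ≤ β j) (h : ∑ j ∈ s, β j ^ r ≤ θ ^ r) :
    ∑ j ∈ s, β j ≤ (#s : ℝ) ^ ((r - 1) / r) * θ := by
  have hr0 : 0 < r := by linarith
  have hbound : (#s : ℝ) ^ ((r - 1) / r) * θ =
      ((#s : ℝ) ^ (r - 1) * θ ^ r) ^ (1 / r) := by
    rw [Real.mul_rpow (by positivity) (by positivity), ← Real.rpow_mul (by positivity),
      ← Real.rpow_mul hθ, mul_one_div, mul_one_div_cancel hr0.ne', Real.rpow_one]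
  rw [hbound, ← Real.rpow_le_rpow_iff (sum_nonneg hβ) (by positivity) hr0,
    ← Real.rpow_mul (by positivity), one_div_mul_cancel hr0.ne', Real.rpow_one]
  calc (∑ j ∈ s, β j) ^ r ≤ (#s : ℝ) ^ (r - 1) * ∑ j ∈ s, β j ^ r :=
        Real.rpow_sum_le_const_mul_sum_rpow_of_nonneg s hr hβ
    _ ≤ (#s : ℝ) ^ (r - 1) * θ ^ r := by gcongr

section Robust

variable {ι : Type*}

noncomputable def minCost (y : Finset (Finset ι)) (c : ι → ℝ) : ℝ :=
  sInf {u : ℝ | ∃ s ∈ y, u = ∑ j ∈ s, c j}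

lemma minCost_eq_inf' {y : Finset (Finset ι)} (hy : y.Nonempty) (c : ι → ℝ) :
    minCost y c = y.inf' hy fun s => ∑ j ∈ s, c j :=
  sInf_setOf_exists_mem_eq_s13 y hy _

lemma minCost_add_le {y : Finset (Finset ι)} (hy : y.Nonempty) (c β : ι → ℝ) {B : ℝ}
    (hB : ∀ s ∈ y, ∑ j ∈ s, β j ≤ B) : minCost y (c + β) ≤ minCost y c + B := by
  rw [minCost_eq_inf' hy, minCost_eq_inf' hy]
  obtain ⟨s, hs, hmin⟩ := exists_mem_eq_inf' hy fun s => ∑ j ∈ s, c j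
  calc y.inf' hy (fun s => ∑ j ∈ s, (c + β) j) ≤ ∑ j ∈ s, (c + β) j := inf'_le _ hs
    _ = ∑ j ∈ s, c j + ∑ j ∈ s, β j := sum_add_distrib
    _ ≤ _ := by rw [hmin]; exact add_le_add_right (hB s hs) _

lemma le_minCost_add {y : Finset (Finset ι)} (hy : y.Nonempty) (c β : ι → ℝ) {b : ℝ}
    (hb : ∀ s ∈ y, b ≤ ∑ j ∈ s, β j) : minCost y c + b ≤ minCost y (c + β) := by
  rw [minCost_eq_inf' hy, minCost_eq_inf' hy]
  refine le_inf' hy _ fun s hs => ?_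
  calc y.inf' hy (fun s => ∑ j ∈ s, c j) + b ≤ ∑ j ∈ s, c j + ∑ j ∈ s, β j :=
        add_le_add (inf'_le _ hs) (hb s hs)
    _ = ∑ j ∈ s, (c + β) j := sum_add_distrib.symm

variable [DecidableEq ι]

/-- The values whose supremum is the `k`-th summand of `v_{UΓ}` when `c = c̄^k`. -/
def robustValues (F : Finset (Finset (Finset ι))) (c : ι → ℝ) (θ r : ℝ) : Set ℝ :=
  {t | ∃ y ∈ F, ∃ β : ι → ℝ, (∀ j ∈ y.biUnion id, 0 ≤ β j) ∧
    ∑ j ∈ y.biUnion id, β j ^ r ≤ θ ^ r ∧ t = minCost y (c + β)}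

variable {F : Finset (Finset (Finset ι))} {Γ : ℕ} {c : ι → ℝ} {θ r : ℝ}

lemma card_biUnion_pos {y : Finset (Finset ι)} (hy : y.Nonempty)
    (hcard : ∀ s ∈ y, #s = Γ) (hΓ : 0 < Γ) : 0 < #(y.biUnion id) := by
  obtain ⟨s, hs⟩ := hy
  have hs_ne : s.Nonempty := card_pos.mp (hcard s hs ▸ hΓ)
  exact card_pos.mpr (hs_ne.mono (subset_biUnion_of_mem id hs))

lemma exists_mem_robustValues_ge {y : Finset (Finset ι)} (hy : y ∈ F) (hne : y.Nonempty)
    (hcard : ∀ s ∈ y, #s = Γ) (hΓ : 0 < Γ) (hθ : 0 ≤ θ) (hr : 1 ≤ r) :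
    ∃ t ∈ robustValues F c θ r,
      minCost y c + Γ * θ / (#(y.biUnion id) : ℝ) ^ (1 / r) ≤ t := by
  set m : ℝ := (#(y.biUnion id) : ℝ)
  have hm : 0 < m := Nat.cast_pos.mpr (card_biUnion_pos hne hcard hΓ)
  have hr0 : r ≠ 0 := by linarith
  set b := θ / m ^ (1 / r)
  have hb : 0 ≤ b := by positivity
  have hbr : m * b ^ r = θ ^ r := by
    rw [Real.div_rpow hθ (by positivity), ← Real.rpow_mul hm.le, one_div_mul_cancel hr0,
      Real.rpow_one, mul_div_cancel₀ _ hm.ne']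
  refine ⟨_, ⟨y, hy, fun _ => b, fun _ _ => hb, ?_, rfl⟩, ?_⟩
  · rw [sum_const, nsmul_eq_mul, hbr]
  · rw [mul_div_assoc]
    exact le_minCost_add hne c _ fun s hs => by rw [sum_const, hcard s hs, nsmul_eq_mul]

lemma le_of_mem_robustValues (hF : F.Nonempty) (hyne : ∀ y ∈ F, y.Nonempty)
    (hcard : ∀ y ∈ F, ∀ s ∈ y, #s = Γ) (hθ : 0 ≤ θ) (hr : 1 ≤ r) {t : ℝ}
    (ht : t ∈ robustValues F c θ r) :
    t ≤ F.sup' hF (minCost · c) + (Γ : ℝ) ^ ((r - 1) / r) * θ := by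
  obtain ⟨y, hy, β, hβ, hβr, rfl⟩ := ht
  refine (minCost_add_le (hyne y hy) c β fun s hs => ?_).trans
    (add_le_add_left (le_sup' (minCost · c) hy) _)
  have hsub : s ⊆ y.biUnion id := subset_biUnion_of_mem id hs
  rw [← hcard y hy s hs]
  refine sum_le_card_rpow_mul_of_sum_rpow_le hr hθ (fun j hj => hβ j (hsub hj)) ?_
  exact (sum_le_sum_of_subset_of_nonneg hsub fun j hj _ =>
    Real.rpow_nonneg (hβ j hj) r).trans hβr

lemma sSup_robustValues_le (hF : F.Nonempty) (hyne : ∀ y ∈ F, y.Nonempty)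
    (hcard : ∀ y ∈ F, ∀ s ∈ y, #s = Γ) (hθ : 0 ≤ θ) (hr : 1 ≤ r) :
    sSup (robustValues F c θ r) ≤
      sSup {t | ∃ y ∈ F, t = minCost y c} + (Γ : ℝ) ^ ((r - 1) / r) * θ := by
  obtain ⟨y, hy⟩ := hF
  have hzero : ∑ j ∈ y.biUnion id, (0 : ℝ) ^ r ≤ θ ^ r := by
    rw [Real.zero_rpow (by linarith), sum_const_zero]
    positivity
  have hne : (robustValues F c θ r).Nonempty := ⟨_, y, hy, 0, fun _ _ => le_rfl, hzero, rfl⟩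
  rw [sSup_setOf_exists_mem_eq_s13 F ⟨y, hy⟩]
  exact csSup_le hne fun t ht => le_of_mem_robustValues ⟨y, hy⟩ hyne hcard hθ hr ht

lemma le_sSup_robustValues (hF : F.Nonempty) (hyne : ∀ y ∈ F, y.Nonempty)
    (hcard : ∀ y ∈ F, ∀ s ∈ y, #s = Γ) (hΓ : 0 < Γ) (hθ : 0 ≤ θ) (hr : 1 ≤ r) :
    sSup {t | ∃ y ∈ F, t = minCost y c} +
        Γ * θ / F.sup' hF (fun y => (#(y.biUnion id) : ℝ) ^ (1 / r)) ≤
      sSup (robustValues F c θ r) := by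
  rw [sSup_setOf_exists_mem_eq_s13 F hF]
  obtain ⟨y, hy, hmax⟩ := exists_mem_eq_sup' hF (minCost · c)
  obtain ⟨t, ht, hle⟩ :=
    exists_mem_robustValues_ge (c := c) hy (hyne y hy) (hcard y hy) hΓ hθ hr
  have hbdd : BddAbove (robustValues F c θ r) :=
    ⟨_, fun t ht => le_of_mem_robustValues hF hyne hcard hθ hr ht⟩
  have hm : (0 : ℝ) < (#(y.biUnion id) : ℝ) ^ (1 / r) := by
    have := card_biUnion_pos (hyne y hy) (hcard y hy) hΓ
    positivity
  calc F.sup' hF (minCost · c) + Γ * θ / F.sup' hF (fun y => (#(y.biUnion id) : ℝ) ^ (1 / r))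
      ≤ minCost y c + Γ * θ / (#(y.biUnion id) : ℝ) ^ (1 / r) := by
        rw [hmax]
        gcongr
        exact le_sup' (fun y => (#(y.biUnion id) : ℝ) ^ (1 / r)) hy
    _ ≤ t := hle
    _ ≤ sSup (robustValues F c θ r) := le_csSup hbdd ht

end Robust

/-- Bounds for DRΓBCP-U:
`v^{SAA}_{UΓ} + Γθ / max_{y∈F_Γ} |∪_{s∈y} s|^{1/r} ≤ v_{UΓ} ≤ v^{SAA}_{UΓ} + Γ^{(r−1)/r} θ`. -/
theorem drgbcp_u_saa_bounds (n N Γ : ℕ) (hN : 0 < N) (hΓ : 1 ≤ Γ)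
    (FΓ : Finset (Finset (Finset (Fin n)))) (hF : FΓ.Nonempty)
    (hyne : ∀ y ∈ FΓ, y.Nonempty)
    (hysub : ∀ y ∈ FΓ, ∀ s ∈ y, s.card = Γ)
    (cbar : Fin N → Fin n → ℝ) (θ r : ℝ) (hθ : 0 ≤ θ) (hr : 1 ≤ r)
    (vUΓ vSAA : ℝ)
    (hvUΓ : vUΓ = (1 / N : ℝ) * ∑ k : Fin N,
      sSup {t : ℝ | ∃ y ∈ FΓ, ∃ β : Fin n → ℝ,
        (∀ j ∈ y.biUnion id, 0 ≤ β j) ∧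
        (∑ j ∈ y.biUnion id, β j ^ r) ≤ θ ^ r ∧
        t = sInf {u : ℝ | ∃ s ∈ y, u = ∑ j ∈ s, (cbar k j + β j)}})
    (hvSAA : vSAA = (1 / N : ℝ) * ∑ k : Fin N,
      sSup {t : ℝ | ∃ y ∈ FΓ, t = sInf {u : ℝ | ∃ s ∈ y, u = ∑ j ∈ s, cbar k j}}) :
    vSAA + (Γ : ℝ) * θ /
        (FΓ.sup' hF fun y => (((y.biUnion id).card : ℝ) ^ (1 / r))) ≤ vUΓ ∧
      vUΓ ≤ vSAA + (Γ : ℝ) ^ ((r - 1) / r) * θ := by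
  subst hvUΓ hvSAA
  constructor
  · rw [← mean_add_const hN]
    gcongr with k
    exact le_sSup_robustValues hF hyne hysub hΓ hθ hr
  · rw [← mean_add_const hN]
    gcongr with k
    exact sSup_robustValues_le hF hyne hysub hθ hr
end
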